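/- Let c ∈ ℂ and let k ≥ 1 be an integer such that (c)_k ≠ 0 and (2c)_k ≠ 0. Then the value of Q_k at z = 1 equals (c + 1/2)_{⌊k/2⌋} / (c + ⌈k/2⌉)_{⌊k/2⌋} (the same formula for both even and odd k). In particular, z = 1 is not a root of Q_k. -/

import Mathlib

open Polynomial Finset

/-- The Gauss hypergeometric polynomial `₂F₁(-k/2, -(k-1)/2; 1-k-c; z)` as a polynomial in `z`,
of degree `⌊k/2⌋`. -/
noncomputable def hypQ (c : ℂ) (k : ℕ) : Polynomial ℂ :=
  ∑ j ∈ Finset.range (k / 2 + 1),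
    Polynomial.C ((ascPochhammer ℂ j).eval (-(k : ℂ) / 2) *
        (ascPochhammer ℂ j).eval (-((k : ℂ) - 1) / 2) /
      ((ascPochhammer ℂ j).eval (1 - (k : ℂ) - c) * (j.factorial : ℂ))) * Polynomial.X ^ j

/-!
One of the parameters `-k/2`, `-(k-1)/2` is the negative integer `-m`, `m = ⌊k/2⌋`, and the
other is `1/2 - ⌈k/2⌉`, so `Q_k(1)` is a terminating Gauss sum and Chu–Vandermonde gives
`₂F₁(-m, b; γ; 1) = (γ - b)_m / (γ)_m`; after clearing denominators this is Vandermonde's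
convolution for falling factorials. The reflection `(x)_m = (-1)^m (1 - x - m)_m` turns numerator
and denominator into `(c + 1/2)_m` and `(c + ⌈k/2⌉)_m`. Neither vanishes: the first divides
`(2c)_{2m} = 4^m (c)_m (c + 1/2)_m`, a factor of `(2c)_k`, and the second is a factor of
`(c)_k = (c)_{⌈k/2⌉} (c + ⌈k/2⌉)_m`.
-/

namespace Polynomial

theorem ascPochhammer_eval_add {R : Type*} [CommSemiring R] (n m : ℕ) (x : R) :
    (ascPochhammer R (n + m)).eval x
      = (ascPochhammer R n).eval x * (ascPochhammer R m).eval (x + n) := by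
  rw [← ascPochhammer_mul, eval_mul, eval_comp, eval_add, eval_X, eval_natCast]

theorem ascPochhammer_eval_ne_zero_of_le {R : Type*} [CommSemiring R] {j m : ℕ} {x : R}
    (hx : (ascPochhammer R m).eval x ≠ 0) (hjm : j ≤ m) : (ascPochhammer R j).eval x ≠ 0 := by
  rw [← Nat.add_sub_cancel' hjm, ascPochhammer_eval_add] at hx
  exact left_ne_zero_of_mul hx

variable {R : Type*} [CommRing R]

theorem ascPochhammer_eval_reflect (n : ℕ) (x : R) :
    (ascPochhammer R n).eval x = (-1) ^ n * (ascPochhammer R n).eval (-x - n + 1) := by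
  rw [← neg_neg x, ascPochhammer_eval_neg_eq_descPochhammer, descPochhammer_eval_eq_ascPochhammer,
    neg_neg]

theorem ascPochhammer_eval_neg_natCast (j m : ℕ) :
    (ascPochhammer R j).eval (-(m : R)) = (-1) ^ j * m.descFactorial j := by
  rw [ascPochhammer_eval_neg_eq_descPochhammer, descPochhammer_eval_eq_descFactorial]

theorem descPochhammer_smeval_eq_eval (n : ℕ) (x : R) :
    (descPochhammer ℤ n).smeval x = (descPochhammer R n).eval x := by
  rw [descPochhammer_smeval_eq_ascPochhammer, ascPochhammer_smeval_eq_eval,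
    descPochhammer_eval_eq_ascPochhammer]

theorem descPochhammer_eval_add (n : ℕ) (x y : R) :
    (descPochhammer R n).eval (x + y) = ∑ ij ∈ antidiagonal n,
      n.choose ij.1 * ((descPochhammer R ij.1).eval x * (descPochhammer R ij.2).eval y) := by
  simpa only [descPochhammer_smeval_eq_eval] using
    Ring.descPochhammer_smeval_add n (Commute.all x y)

theorem ascPochhammer_eval_two_mul {K : Type*} [Field K] [CharZero K] (m : ℕ) (x : K) :
    (ascPochhammer K (2 * m)).eval (2 * x)
      = 4 ^ m * (ascPochhammer K m).eval x * (ascPochhammer K m).eval (x + 1 / 2) := by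
  induction m with
  | zero => simp
  | succ m ih =>
    rw [show 2 * (m + 1) = 2 * m + 1 + 1 by ring, ascPochhammer_succ_eval,
      ascPochhammer_succ_eval, ih, ascPochhammer_succ_eval, ascPochhammer_succ_eval]
    push_cast
    ring

theorem chu_vandermonde_ascPochhammer_eval {K : Type*} [Field K] [CharZero K] (m : ℕ) (b γ : K)
    (hγ : (ascPochhammer K m).eval γ ≠ 0) :
    ∑ j ∈ range (m + 1), (ascPochhammer K j).eval (-(m : K)) * (ascPochhammer K j).eval b /
        ((ascPochhammer K j).eval γ * j.factorial)
      = (ascPochhammer K m).eval (γ - b) / (ascPochhammer K m).eval γ := by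
  rw [eq_div_iff hγ, sum_mul]
  have hterm : ∀ j ∈ range (m + 1),
      (ascPochhammer K j).eval (-(m : K)) * (ascPochhammer K j).eval b /
          ((ascPochhammer K j).eval γ * j.factorial) * (ascPochhammer K m).eval γ
        = m.choose j * ((descPochhammer K j).eval (-b) *
            (descPochhammer K (m - j)).eval (γ + m - 1)) := by
    intro j hj
    have hjm : j ≤ m := Nat.lt_succ_iff.mp (mem_range.mp hj)
    have hγj : (ascPochhammer K j).eval γ ≠ 0 := ascPochhammer_eval_ne_zero_of_le hγ hjm
    have hsplit := ascPochhammer_eval_add j (m - j) γ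
    rw [Nat.add_sub_cancel' hjm] at hsplit
    have hb : (descPochhammer K j).eval (-b) = (-1) ^ j * (ascPochhammer K j).eval b := by
      rw [← neg_neg b, ascPochhammer_eval_neg_eq_descPochhammer, neg_neg, ← mul_assoc, ← mul_pow]
      simp
    have hshift : γ + m - 1 - ((m - j : ℕ) : K) + 1 = γ + j := by
      rw [Nat.cast_sub hjm]; ring
    have hfact : (j.factorial : K) ≠ 0 := Nat.cast_ne_zero.mpr j.factorial_ne_zero
    rw [hsplit, ascPochhammer_eval_neg_natCast, Nat.descFactorial_eq_factorial_mul_choose, hb,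
      descPochhammer_eval_eq_ascPochhammer K _ (m - j), hshift]
    field_simp
    push_cast
    ring
  rw [sum_congr rfl hterm, ← Nat.sum_antidiagonal_eq_sum_range_succ
    (fun i j => (m.choose i : K) * ((descPochhammer K i).eval (-b) *
      (descPochhammer K j).eval (γ + m - 1))), ← descPochhammer_eval_add,
    descPochhammer_eval_eq_ascPochhammer]
  congr 1
  ring

end Polynomial

theorem ascPochhammer_eval_neg_div_two_mul {K : Type*} [Field K] [CharZero K] (k j : ℕ) :
    (ascPochhammer K j).eval (-(k : K) / 2) * (ascPochhammer K j).eval (-((k : K) - 1) / 2)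
      = (ascPochhammer K j).eval (-((k / 2 : ℕ) : K)) *
          (ascPochhammer K j).eval (1 / 2 - (((k + 1) / 2 : ℕ) : K)) := by
  obtain ⟨m, rfl | rfl⟩ := Nat.even_or_odd' k
  · rw [show 2 * m / 2 = m by omega, show (2 * m + 1) / 2 = m by omega]
    congr 2 <;> push_cast <;> ring
  · rw [show (2 * m + 1) / 2 = m by omega, show (2 * m + 1 + 1) / 2 = m + 1 by omega, mul_comm]
    congr 2 <;> push_cast <;> ring

theorem hypQ_eval_one (c : ℂ) (k : ℕ) :
    (hypQ c k).eval 1 = ∑ j ∈ range (k / 2 + 1),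
      (ascPochhammer ℂ j).eval (-((k / 2 : ℕ) : ℂ)) *
          (ascPochhammer ℂ j).eval (1 / 2 - (((k + 1) / 2 : ℕ) : ℂ)) /
        ((ascPochhammer ℂ j).eval (1 - (k : ℂ) - c) * j.factorial) := by
  simp only [hypQ, eval_finsetSum, eval_mul, eval_C, eval_pow, eval_X, one_pow, mul_one,
    ascPochhammer_eval_neg_div_two_mul]

theorem stmt_6_general (c : ℂ) (k : ℕ)
    (hc : (ascPochhammer ℂ k).eval c ≠ 0)
    (h2c : (ascPochhammer ℂ k).eval (2 * c) ≠ 0) :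
    (hypQ c k).eval 1
        = (ascPochhammer ℂ (k / 2)).eval (c + 1 / 2) /
          (ascPochhammer ℂ (k / 2)).eval (c + (((k + 1) / 2 : ℕ) : ℂ)) ∧
      (hypQ c k).eval 1 ≠ 0 := by
  rw [hypQ_eval_one]
  set m := k / 2
  set m' := (k + 1) / 2
  have hk : k = m' + m := by omega
  have hden : (ascPochhammer ℂ m).eval (c + m') ≠ 0 := by
    rw [hk, ascPochhammer_eval_add] at hc
    exact right_ne_zero_of_mul hc
  have hnum : (ascPochhammer ℂ m).eval (c + 1 / 2) ≠ 0 := by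
    have h := ascPochhammer_eval_ne_zero_of_le h2c (show 2 * m ≤ k by omega)
    rw [ascPochhammer_eval_two_mul] at h
    exact right_ne_zero_of_mul h
  have hγ : (ascPochhammer ℂ m).eval (1 - (k : ℂ) - c)
      = (-1) ^ m * (ascPochhammer ℂ m).eval (c + m') := by
    rw [ascPochhammer_eval_reflect, hk]
    congr 2
    push_cast
    ring
  have hγb : (ascPochhammer ℂ m).eval (1 - (k : ℂ) - c - (1 / 2 - m'))
      = (-1) ^ m * (ascPochhammer ℂ m).eval (c + 1 / 2) := by
    rw [ascPochhammer_eval_reflect, hk]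
    congr 2
    push_cast
    ring
  have hsign : (-1 : ℂ) ^ m ≠ 0 := pow_ne_zero m (neg_ne_zero.mpr one_ne_zero)
  have hQ := chu_vandermonde_ascPochhammer_eval m (1 / 2 - (m' : ℂ)) (1 - (k : ℂ) - c)
    (hγ ▸ mul_ne_zero hsign hden)
  rw [hγb, hγ, mul_div_mul_left _ _ hsign] at hQ
  exact ⟨hQ, hQ ▸ div_ne_zero hnum hden⟩

/-- `Q k (1) = (c + 1/2)_{⌊k/2⌋} / (c + ⌈k/2⌉)_{⌊k/2⌋}`, for both even and odd `k`;
in particular `z = 1` is not a root of `Q k`. -/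
theorem stmt_6 (c : ℂ) (k : ℕ) (hk : 1 ≤ k)
    (hc : (ascPochhammer ℂ k).eval c ≠ 0)
    (h2c : (ascPochhammer ℂ k).eval (2 * c) ≠ 0) :
    (hypQ c k).eval 1
        = (ascPochhammer ℂ (k / 2)).eval (c + 1 / 2) /
          (ascPochhammer ℂ (k / 2)).eval (c + (((k + 1) / 2 : ℕ) : ℂ)) ∧
      (hypQ c k).eval 1 ≠ 0 :=
  stmt_6_general c k hc h2c
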